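/- Let (X,d) and (Y,e) be metric spaces, D ⊆ X, θ : D → Y, and A ⊆ X, B ⊆ Y dense subsets. Then θ is continuous on D if and only if there exists an A,B-approximation system for θ. -/

import Mathlib

def IsApproxSystem {X Y : Type*} [MetricSpace X] [MetricSpace Y]
    (A : Set X) (B : Set Y) (D : Set X) (θ : X → Y)
    (S : Set (X × ℕ × Y × ℕ)) : Prop :=
  (∀ p ∈ S, p.1 ∈ A ∧ p.2.2.1 ∈ B) ∧
  ∀ ξ ∈ D,
    (∀ (a : X) (m : ℕ) (b : Y) (n : ℕ), (a, m, b, n) ∈ S →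
      dist a ξ < 1 / (m + 1) → dist b (θ ξ) < 1 / (n + 1)) ∧
    (∀ n : ℕ, ∃ m : ℕ, ∀ a ∈ A, dist a ξ < 1 / (m + 1) →
      ∃ b ∈ B, (a, m, b, n) ∈ S)

/-!
Continuity at `ξ` makes `θ` stay within `1/(n+1)` of a single point `b ∈ B` on a whole ball
around `ξ`, so the set of all `(a, m, b, n)` that are correct for every `ξ ∈ D` is already an
approximation system. Conversely, given `ξ' ∈ D` close to `ξ`, density of `A` yields one `a`
within `1/(m+1)` of both; the `b` attached to `(a, m, n)` is then within `1/(n+1)` of both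
`θ ξ` and `θ ξ'`.
-/

theorem ContinuousOn.exists_mem_dense_forall_dist_lt {X Y : Type*} [PseudoMetricSpace X]
    [PseudoMetricSpace Y] {B : Set Y} {D : Set X} {θ : X → Y}
    (hθ : ContinuousOn θ D) (hB : Dense B) {ξ : X} (hξ : ξ ∈ D) {ε : ℝ} (hε : 0 < ε) :
    ∃ δ > 0, ∃ b ∈ B, ∀ ξ' ∈ D, dist ξ' ξ < δ → dist b (θ ξ') < ε := by
  obtain ⟨δ, hδ, hθδ⟩ := Metric.continuousOn_iff.1 hθ ξ hξ (ε / 2) (half_pos hε)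
  obtain ⟨b, hb, hbξ⟩ := hB.exists_dist_lt (θ ξ) (half_pos hε)
  refine ⟨δ, hδ, b, hb, fun ξ' hξ' hξ'ξ => ?_⟩
  calc dist b (θ ξ') ≤ dist (θ ξ) b + dist (θ ξ) (θ ξ') := dist_triangle_left _ _ _
    _ < ε / 2 + ε / 2 := add_lt_add hbξ (dist_comm (θ ξ) _ ▸ hθδ ξ' hξ' hξ'ξ)
    _ = ε := add_halves ε

section ApproxSystem

variable {X Y : Type*} [MetricSpace X] [MetricSpace Y] {A : Set X} {B : Set Y} {D : Set X}
  {θ : X → Y} {S : Set (X × ℕ × Y × ℕ)}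

def maximalApproxSystem (A : Set X) (B : Set Y) (D : Set X) (θ : X → Y) :
    Set (X × ℕ × Y × ℕ) :=
  {p | p.1 ∈ A ∧ p.2.2.1 ∈ B ∧
    ∀ ξ ∈ D, dist p.1 ξ < 1 / (p.2.1 + 1) → dist p.2.2.1 (θ ξ) < 1 / (p.2.2.2 + 1)}

theorem ContinuousOn.isApproxSystem_maximalApproxSystem (hθ : ContinuousOn θ D)
    (hB : Dense B) : IsApproxSystem A B D θ (maximalApproxSystem A B D θ) := by
  refine ⟨fun p hp => ⟨hp.1, hp.2.1⟩, fun ξ hξ => ⟨fun a m b n hS => hS.2.2 ξ hξ, fun n => ?_⟩⟩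
  obtain ⟨δ, hδ, b, hb, hbθ⟩ := hθ.exists_mem_dense_forall_dist_lt hB hξ Nat.one_div_pos_of_nat
  obtain ⟨m, hm⟩ := exists_nat_one_div_lt (half_pos hδ)
  refine ⟨m, fun a ha haξ => ⟨b, hb, ha, hb, fun ξ' hξ' haξ' => hbθ ξ' hξ' ?_⟩⟩
  calc dist ξ' ξ ≤ dist a ξ' + dist a ξ := dist_triangle_left _ _ _
    _ < δ / 2 + δ / 2 := add_lt_add (haξ'.trans hm) (haξ.trans hm)
    _ = δ := add_halves δ

theorem IsApproxSystem.exists_forall_dist_lt (hS : IsApproxSystem A B D θ S) (hA : Dense A)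
    {ξ : X} (hξ : ξ ∈ D) (n : ℕ) :
    ∃ δ > 0, ∀ ξ' ∈ D, dist ξ' ξ < δ → dist (θ ξ') (θ ξ) < 2 / (n + 1) := by
  obtain ⟨m, hm⟩ := (hS.2 ξ hξ).2 n
  set r : ℝ := 1 / (m + 1)
  have hr : 0 < r := Nat.one_div_pos_of_nat
  refine ⟨r / 2, half_pos hr, fun ξ' hξ' hξ'ξ => ?_⟩
  obtain ⟨a, ha, hξ'a⟩ := hA.exists_dist_lt ξ' (half_pos hr)
  rw [dist_comm] at hξ'a
  have haξ' : dist a ξ' < r := hξ'a.trans (half_lt_self hr)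
  have haξ : dist a ξ < r :=
    calc dist a ξ ≤ dist a ξ' + dist ξ' ξ := dist_triangle _ _ _
      _ < r / 2 + r / 2 := add_lt_add hξ'a hξ'ξ
      _ = r := add_halves r
  obtain ⟨b, -, hab⟩ := hm a ha haξ
  calc dist (θ ξ') (θ ξ) ≤ dist b (θ ξ') + dist b (θ ξ) := dist_triangle_left _ _ _
    _ < 1 / (n + 1) + 1 / (n + 1) :=
      add_lt_add ((hS.2 ξ' hξ').1 a m b n hab haξ') ((hS.2 ξ hξ).1 a m b n hab haξ)
    _ = 2 / (n + 1) := by ring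

theorem IsApproxSystem.continuousOn (hS : IsApproxSystem A B D θ S) (hA : Dense A) :
    ContinuousOn θ D := by
  refine Metric.continuousOn_iff.2 fun ξ hξ ε hε => ?_
  obtain ⟨n, hn⟩ := exists_nat_one_div_lt (half_pos hε)
  obtain ⟨δ, hδ, hθ⟩ := hS.exists_forall_dist_lt hA hξ n
  refine ⟨δ, hδ, fun ξ' hξ' hξ'ξ => ?_⟩
  calc dist (θ ξ') (θ ξ) < 2 / (n + 1) := hθ ξ' hξ' hξ'ξ
    _ = 2 * (1 / (n + 1)) := by ring
    _ < ε := by linarith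

end ApproxSystem

theorem continuousOn_iff_exists_approx_system
    {X Y : Type*} [MetricSpace X] [MetricSpace Y]
    (A : Set X) (B : Set Y) (hA : Dense A) (hB : Dense B)
    (D : Set X) (θ : X → Y) :
    ContinuousOn θ D ↔ ∃ S : Set (X × ℕ × Y × ℕ), IsApproxSystem A B D θ S :=
  ⟨fun hθ => ⟨_, hθ.isApproxSystem_maximalApproxSystem hB⟩, fun ⟨_, hS⟩ => hS.continuousOn hA⟩
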